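/- arXiv:2112.03082 — 2 statements merged into one kernel-verified Lean document; each statement's English description precedes it below -/
import Mathlib

section
/- Energy of the predicted instance versus the actual instance (Lemma 'PredictionError'): Let η ≥ 0. Consider n jobs with workloads w_i ≥ 0, actual release times r_i and deadlines d_i with r_i < d_i, and predicted release times p_i and deadlines q_i with p_i < q_i, such that |p_i − r_i| ≤ η·(q_i − p_i) and |q_i − d_i| ≤ η·(q_i − p_i) for every i. Let J_PQ be the instance in which job i has interval [p_i, q_i) and workload w_i, and J_RD the instance in which job i has interval [r_i, d_i) and workload w_i. Then OPT(J_PQ) ≤ (2η + 1)^(α−1) · OPT(J_RD). -/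
open MeasureTheory
open scoped ENNReal

/-- The discrete σ-algebra on `Option ι` (the job assignment takes values in a
countable/finite set of jobs plus "idle"). -/
instance optionMeasurableSpace {ι : Type*} : MeasurableSpace (Option ι) := ⊤

/-- A speed-scaling instance: each job `i` has release time `r i`, deadline `d i`
and workload `w i`. -/
structure SSInstance (ι : Type*) where
  r : ι → ℝ
  d : ι → ℝ
  w : ι → ℝ

/-- A schedule `(s, σ)` (measurable speed function together with a measurable job
assignment) is feasible for the instance `J`: each job is only executed inside its
interval `[r i, d i)` and its whole workload is processed. -/
def SSFeasible {ι : Type*} (J : SSInstance ι) (s : ℝ → ℝ) (σ : ℝ → Option ι) : Prop :=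
  Measurable s ∧ Measurable σ ∧ (∀ t, 0 ≤ s t) ∧
    ∀ i : ι, {t | σ t = some i} ⊆ Set.Ico (J.r i) (J.d i) ∧
      J.w i ≤ ∫ t in {t | σ t = some i}, s t

/-- Energy consumption `∫ s(t)^α dt` of a speed function. -/
noncomputable def SSEnergy (α : ℝ) (s : ℝ → ℝ) : ℝ≥0∞ :=
  ∫⁻ t, ENNReal.ofReal (s t ^ α)

/-- `OPT(J)`: the infimum of the energies of feasible schedules for instance `J`. -/
noncomputable def SSOpt (α : ℝ) {ι : Type*} (J : SSInstance ι) : ℝ≥0∞ :=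
  sInf {E | ∃ s σ, SSFeasible J s σ ∧ E = SSEnergy α s}

/-!
Take a feasible schedule for the actual instance and let `A i` be the set of times at which it
runs job `i`. Each `[r i, d i)` lies in the dilation of `[p i, q i)` by the factor `2η + 1` about
its centre, and dilating the intervals of a finite family multiplies the measure of their union
by at most `2η + 1` (overlapping intervals can first be merged into their hull). Hence, for every
`κ < 1 / (2η + 1)`, the demands `κ |A i|` satisfy Hall's condition for the intervals `[p i, q i)`;
on a fine enough grid of time cells this becomes Hall's marriage theorem, which yields disjoint
sets `B i ⊆ [p i, q i)` with `|B i| ≥ κ |A i|`. Running job `i` at constant speed on `B i` costs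
`w i ^ α * |B i| ^ (1 - α)`, while by Hölder the old schedule spends at least
`w i ^ α * |A i| ^ (1 - α)` on `A i`. So the energy grows by at most `κ ^ (1 - α)`, and letting
`κ → 1 / (2η + 1)` gives the factor `(2η + 1) ^ (α - 1)`.
-/

open Set Function Filter Topology
open scoped Finset

theorem volume_Ico_dilate {η : ℝ} (hη : 0 ≤ η) (a b : ℝ) :
    volume (Ico (a - η * (b - a)) (b + η * (b - a)))
      = ENNReal.ofReal (1 + 2 * η) * volume (Ico a b) := by
  rw [Real.volume_Ico, Real.volume_Ico, ← ENNReal.ofReal_mul (by positivity)]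
  ring_nf

theorem Ico_dilate_subset_Ico_dilate {a b a' b' η : ℝ} (hη : 0 ≤ η) (ha : a' ≤ a) (hb : b ≤ b') :
    Ico (a - η * (b - a)) (b + η * (b - a)) ⊆ Ico (a' - η * (b' - a')) (b' + η * (b' - a')) := by
  have : η * (b - a) ≤ η * (b' - a') := by gcongr
  exact Ico_subset_Ico (by linarith) (by linarith)

theorem volume_biUnion_Ico_dilate_le {η : ℝ} (hη : 0 ≤ η) (S : Finset (ℝ × ℝ)) :
    volume (⋃ I ∈ S, Ico (I.1 - η * (I.2 - I.1)) (I.2 + η * (I.2 - I.1)))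
      ≤ ENNReal.ofReal (1 + 2 * η) * volume (⋃ I ∈ S, Ico I.1 I.2) := by
  classical
  induction hn : S.card using Nat.strong_induction_on generalizing S with
  | _ n ih =>
  by_cases hdisj : (S : Set (ℝ × ℝ)).PairwiseDisjoint fun I => Ico I.1 I.2
  · calc _ ≤ ∑ I ∈ S, volume (Ico (I.1 - η * (I.2 - I.1)) (I.2 + η * (I.2 - I.1))) :=
          measure_biUnion_finset_le S _
      _ = ∑ I ∈ S, ENNReal.ofReal (1 + 2 * η) * volume (Ico I.1 I.2) :=
          Finset.sum_congr rfl fun I _ => volume_Ico_dilate hη _ _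
      _ = _ := by
          rw [← Finset.mul_sum, measure_biUnion_finset hdisj fun _ _ => measurableSet_Ico]
  -- Merging two overlapping intervals into their hull keeps the union, can only enlarge the
  -- union of the dilations, and decreases the number of intervals.
  obtain ⟨I, hI, J, hJ, hIJ, hIJ'⟩ :
      ∃ I ∈ S, ∃ J ∈ S, I ≠ J ∧ ¬Disjoint (Ico I.1 I.2) (Ico J.1 J.2) := by
    simpa [Set.PairwiseDisjoint, Set.Pairwise] using hdisj
  obtain ⟨t, htI, htJ⟩ := not_disjoint_iff.1 hIJ'
  set R := (S.erase I).erase J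
  set H : ℝ × ℝ := (min I.1 J.1, max I.2 J.2)
  have hJR : J ∉ R := Finset.notMem_erase _ _
  have hIR : I ∉ insert J R := by simp [R, hIJ]
  have hS : S = insert I (insert J R) := by
    rw [Finset.insert_erase (Finset.mem_erase.2 ⟨hIJ.symm, hJ⟩), Finset.insert_erase hI]
  have hcard : (insert H R).card < n := by
    rw [← hn, hS, Finset.card_insert_of_notMem hIR, Finset.card_insert_of_notMem hJR]
    exact (Finset.card_insert_le _ _).trans_lt (by omega)
  have hhull : Ico I.1 I.2 ∪ Ico J.1 J.2 = Ico H.1 H.2 :=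
    Ico_union_Ico' (htJ.1.trans htI.2.le) (htI.1.trans htJ.2.le)
  calc _ ≤ volume (⋃ K ∈ insert H R, Ico (K.1 - η * (K.2 - K.1)) (K.2 + η * (K.2 - K.1))) := by
        simp only [hS, Finset.set_biUnion_insert, ← union_assoc]
        exact measure_mono (union_subset_union_left _ (union_subset
          (Ico_dilate_subset_Ico_dilate hη (min_le_left _ _) (le_max_left _ _))
          (Ico_dilate_subset_Ico_dilate hη (min_le_right _ _) (le_max_right _ _))))
    _ ≤ _ := ih _ hcard _ rfl
    _ = _ := by simp only [hS, Finset.set_biUnion_insert, ← union_assoc, hhull]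

theorem sum_volume_le_ofReal_mul_volume_biUnion_Ico {ι : Type*} {η : ℝ} (hη : 0 ≤ η)
    {A : ι → Set ℝ} (hA : ∀ i, MeasurableSet (A i)) (hdisj : Pairwise (Disjoint on A))
    {p q : ι → ℝ} (hApq : ∀ i, A i ⊆ Ico (p i - η * (q i - p i)) (q i + η * (q i - p i)))
    (S : Finset ι) :
    ∑ i ∈ S, volume (A i) ≤ ENNReal.ofReal (1 + 2 * η) * volume (⋃ i ∈ S, Ico (p i) (q i)) := by
  classical
  rw [← measure_biUnion_finset (hdisj.set_pairwise _) fun i _ => hA i]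
  have himage := volume_biUnion_Ico_dilate_le hη (S.image fun i => (p i, q i))
  rw [Finset.set_biUnion_finset_image, Finset.set_biUnion_finset_image] at himage
  exact (measure_mono (biUnion_mono subset_rfl fun i _ => hApq i)).trans himage

def gridCell (δ : ℝ) (z : ℤ) : Set ℝ := Ico (z * δ) ((z + 1) * δ)

noncomputable def gridCells (δ a b : ℝ) : Finset ℤ := Finset.Ico ⌈a / δ⌉ ⌊b / δ⌋

theorem mem_gridCell_iff {δ : ℝ} (hδ : 0 < δ) {t : ℝ} {z : ℤ} :
    t ∈ gridCell δ z ↔ ⌊t / δ⌋ = z := by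
  rw [Int.floor_eq_iff, gridCell, mem_Ico, le_div_iff₀ hδ, div_lt_iff₀ hδ]

theorem pairwise_disjoint_gridCell {δ : ℝ} (hδ : 0 < δ) : Pairwise (Disjoint on gridCell δ) :=
  fun _ _ hzz' => disjoint_left.2 fun _ ht ht' =>
    hzz' (((mem_gridCell_iff hδ).1 ht).symm.trans ((mem_gridCell_iff hδ).1 ht'))

theorem volume_gridCell (δ : ℝ) (z : ℤ) : volume (gridCell δ z) = ENNReal.ofReal δ := by
  rw [gridCell, Real.volume_Ico]
  ring_nf

theorem gridCell_subset_Ico {δ : ℝ} (hδ : 0 < δ) {a b : ℝ} {z : ℤ} (hz : z ∈ gridCells δ a b) :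
    gridCell δ z ⊆ Ico a b := by
  obtain ⟨ha, hb⟩ := Finset.mem_Ico.1 hz
  have ha' : a ≤ z * δ := (div_le_iff₀ hδ).1 (Int.ceil_le.1 ha)
  have hb' : (z + 1) * δ ≤ b := (le_div_iff₀ hδ).1 (by exact_mod_cast Int.le_floor.1 hb)
  exact Ico_subset_Ico ha' hb'

theorem Ico_subset_biUnion_gridCell_union {δ : ℝ} (hδ : 0 < δ) (a b : ℝ) :
    Ico a b ⊆ (⋃ z ∈ gridCells δ a b, gridCell δ z) ∪
      (Ico a (⌈a / δ⌉ * δ) ∪ Ico (⌊b / δ⌋ * δ) b) := by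
  rintro t ⟨hat, htb⟩
  by_cases hl : t < ⌈a / δ⌉ * δ
  · exact Or.inr (Or.inl ⟨hat, hl⟩)
  by_cases hr : ⌊b / δ⌋ * δ ≤ t
  · exact Or.inr (Or.inr ⟨hr, htb⟩)
  rw [not_lt] at hl
  rw [not_le] at hr
  refine Or.inl (mem_biUnion (x := ⌊t / δ⌋) (Finset.mem_Ico.2 ⟨?_, ?_⟩)
    ((mem_gridCell_iff hδ).2 rfl))
  · exact Int.le_floor.2 ((le_div_iff₀ hδ).2 hl)
  · exact Int.floor_lt.2 ((div_lt_iff₀ hδ).2 hr)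

theorem volume_biUnion_Ico_le_card_gridCells {δ : ℝ} (hδ : 0 < δ) {ι : Type*} [DecidableEq ι]
    (S : Finset ι) (p q : ι → ℝ) :
    volume (⋃ i ∈ S, Ico (p i) (q i)) ≤
      ENNReal.ofReal (δ * (#(S.biUnion fun i => gridCells δ (p i) (q i)) + 2 * #S)) := by
  have hedges : ∀ i ∈ S,
      volume (Ico (p i) (⌈p i / δ⌉ * δ) ∪ Ico (⌊q i / δ⌋ * δ) (q i)) ≤ 2 * ENNReal.ofReal δ := by
    intro i _
    refine (measure_union_le _ _).trans ?_
    rw [Real.volume_Ico, Real.volume_Ico, two_mul]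
    gcongr
    · have := mul_lt_mul_of_pos_right (Int.ceil_lt_add_one (p i / δ)) hδ
      rw [add_mul, div_mul_cancel₀ _ hδ.ne', one_mul] at this
      linarith
    · have := mul_lt_mul_of_pos_right (Int.lt_floor_add_one (q i / δ)) hδ
      rw [add_mul, div_mul_cancel₀ _ hδ.ne', one_mul] at this
      linarith
  calc volume (⋃ i ∈ S, Ico (p i) (q i))
      ≤ volume ((⋃ z ∈ S.biUnion fun i => gridCells δ (p i) (q i), gridCell δ z) ∪
          ⋃ i ∈ S, (Ico (p i) (⌈p i / δ⌉ * δ) ∪ Ico (⌊q i / δ⌋ * δ) (q i))) := by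
        refine measure_mono (iUnion₂_subset fun i hi =>
          (Ico_subset_biUnion_gridCell_union hδ _ _).trans (union_subset_union ?_ ?_))
        · exact biUnion_mono (fun z hz => Finset.mem_biUnion.2 ⟨i, hi, hz⟩) fun _ _ => le_rfl
        · exact fun _ hx => mem_biUnion hi hx
    _ ≤ ∑ z ∈ S.biUnion fun i => gridCells δ (p i) (q i), volume (gridCell δ z) +
          ∑ i ∈ S, 2 * ENNReal.ofReal δ :=
        (measure_union_le _ _).trans (add_le_add (measure_biUnion_finset_le _ _)
          ((measure_biUnion_finset_le _ _).trans (Finset.sum_le_sum hedges)))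
    _ = _ := by
        simp only [volume_gridCell, Finset.sum_const, nsmul_eq_mul]
        rw [ENNReal.ofReal_mul hδ.le, ENNReal.ofReal_add (by positivity) (by positivity),
          ENNReal.ofReal_mul (by norm_num), ENNReal.ofReal_natCast, ENNReal.ofReal_natCast,
          ENNReal.ofReal_ofNat]
        ring

theorem exists_sum_ceil_le_card_gridCells {ι : Type*} [Fintype ι] [DecidableEq ι]
    {p q m : ι → ℝ} {θ : ℝ} (hpq : ∀ i, p i < q i) (hm : ∀ i, 0 ≤ m i) (hθ : θ < 1)
    (hall : ∀ S : Finset ι, ∑ i ∈ S, m i ≤ θ * (volume (⋃ i ∈ S, Ico (p i) (q i))).toReal) :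
    ∃ δ > 0, ∀ S : Finset ι,
      ∑ i ∈ S, ⌈m i / δ⌉₊ ≤ #(S.biUnion fun i => gridCells δ (p i) (q i)) := by
  -- Each interval loses at most two boundary cells and each ceiling adds at most one cell;
  -- on a mesh this fine these `3 * #S` cells fit into the slack `(1 - θ)` times the union.
  obtain ⟨δ, hδ_small, hδ⟩ :
      ∃ δ, (∀ i, 3 * δ * Fintype.card ι < (1 - θ) * (q i - p i)) ∧ 0 < δ := by
    have : ∀ᶠ δ in 𝓝[>] (0 : ℝ), ∀ i, 3 * δ * Fintype.card ι < (1 - θ) * (q i - p i) :=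
      eventually_all.2 fun i => nhdsWithin_le_nhds <|
        ((continuous_const.mul continuous_id).mul continuous_const).tendsto' 0 0 (by simp)
          |>.eventually (gt_mem_nhds (by nlinarith [hpq i]))
    exact (this.and self_mem_nhdsWithin).exists
  refine ⟨δ, hδ, fun S => ?_⟩
  rcases S.eq_empty_or_nonempty with rfl | ⟨i₀, hi₀⟩
  · simp
  set U := S.biUnion fun i => gridCells δ (p i) (q i)
  have hcover := volume_biUnion_Ico_le_card_gridCells hδ S p q
  set V := (volume (⋃ i ∈ S, Ico (p i) (q i))).toReal
  have hV : V ≤ δ * (#U + 2 * #S) := ENNReal.toReal_le_of_le_ofReal (by positivity) hcover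
  have hV₀ : q i₀ - p i₀ ≤ V := by
    have hfin : volume (⋃ i ∈ S, Ico (p i) (q i)) ≠ ⊤ :=
      ne_top_of_le_ne_top ENNReal.ofReal_ne_top hcover
    have := ENNReal.toReal_mono hfin (measure_mono fun _ hx => mem_biUnion hi₀ hx)
    rwa [Real.volume_Ico, ENNReal.toReal_ofReal (sub_pos.2 (hpq i₀)).le] at this
  have hslack : 3 * δ * #S ≤ (1 - θ) * V := calc
    3 * δ * #S ≤ 3 * δ * Fintype.card ι := by gcongr; exact_mod_cast S.card_le_univ
    _ ≤ (1 - θ) * (q i₀ - p i₀) := (hδ_small i₀).le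
    _ ≤ (1 - θ) * V := by gcongr
  have hceil : ∀ i ∈ S, (⌈m i / δ⌉₊ : ℝ) * δ ≤ m i + δ := fun i _ => by
    have := mul_lt_mul_of_pos_right (Nat.ceil_lt_add_one (div_nonneg (hm i) hδ.le)) hδ
    rw [add_mul, div_mul_cancel₀ _ hδ.ne', one_mul] at this
    exact this.le
  have : (∑ i ∈ S, ⌈m i / δ⌉₊ : ℝ) * δ ≤ #U * δ := by
    calc (∑ i ∈ S, ⌈m i / δ⌉₊ : ℝ) * δ ≤ ∑ i ∈ S, (m i + δ) := by
          rw [Finset.sum_mul]; exact Finset.sum_le_sum hceil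
      _ = ∑ i ∈ S, m i + #S * δ := by rw [Finset.sum_add_distrib, Finset.sum_const, nsmul_eq_mul]
      _ ≤ #U * δ := by linarith [hall S]
  exact_mod_cast le_of_mul_le_mul_right this hδ

theorem Finset.exists_injective_sigma_of_sum_le_card_biUnion {ι α : Type*} [DecidableEq α]
    (t : ι → Finset α) (k : ι → ℕ) (h : ∀ S : Finset ι, ∑ i ∈ S, k i ≤ #(S.biUnion t)) :
    ∃ f : (Σ i, Fin (k i)) → α, Injective f ∧ ∀ x, f x ∈ t x.1 := by
  classical
  refine (Finset.all_card_le_biUnion_card_iff_exists_injective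
    fun x : Σ i, Fin (k i) => t x.1).1 fun s => ?_
  calc #s ≤ #((s.image Sigma.fst).sigma fun i => Finset.univ) :=
        Finset.card_le_card fun x hx =>
          Finset.mem_sigma.2 ⟨Finset.mem_image_of_mem _ hx, Finset.mem_univ _⟩
    _ = ∑ i ∈ s.image Sigma.fst, k i := by simp [Finset.card_sigma]
    _ ≤ #((s.image Sigma.fst).biUnion t) := h _
    _ = #(s.biUnion fun x => t x.1) := by rw [Finset.image_biUnion]

theorem exists_gridCell_packing {ι : Type*} {δ : ℝ} (hδ : 0 < δ) {p q : ι → ℝ} (k : ι → ℕ)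
    (hall : ∀ S : Finset ι, ∑ i ∈ S, k i ≤ #(S.biUnion fun i => gridCells δ (p i) (q i))) :
    ∃ B : ι → Set ℝ, (∀ i, MeasurableSet (B i)) ∧ Pairwise (Disjoint on B) ∧
      (∀ i, B i ⊆ Ico (p i) (q i)) ∧ ∀ i, volume (B i) = k i * ENNReal.ofReal δ := by
  obtain ⟨f, hf, hft⟩ := Finset.exists_injective_sigma_of_sum_le_card_biUnion _ k hall
  have hdisj : Pairwise (Disjoint on fun x => gridCell δ (f x)) :=
    (pairwise_disjoint_gridCell hδ).comp_of_injective hf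
  refine ⟨fun i => ⋃ j, gridCell δ (f ⟨i, j⟩), fun i => .iUnion fun j => measurableSet_Ico,
    fun i i' hii' => ?_, fun i => iUnion_subset fun j => gridCell_subset_Ico hδ (hft ⟨i, j⟩),
    fun i => ?_⟩
  · exact disjoint_iUnion_left.2 fun j => disjoint_iUnion_right.2 fun j' =>
      hdisj fun h => hii' (congrArg Sigma.fst h)
  · rw [measure_iUnion (hdisj.comp_of_injective sigma_mk_injective) fun j => measurableSet_Ico]
    simp [volume_gridCell]

theorem exists_pairwiseDisjoint_subset_Ico_of_sum_le {ι : Type*} [Fintype ι]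
    {p q m : ι → ℝ} {θ : ℝ} (hpq : ∀ i, p i < q i) (hm : ∀ i, 0 ≤ m i) (hθ : θ < 1)
    (hall : ∀ S : Finset ι, ∑ i ∈ S, m i ≤ θ * (volume (⋃ i ∈ S, Ico (p i) (q i))).toReal) :
    ∃ B : ι → Set ℝ, (∀ i, MeasurableSet (B i)) ∧ Pairwise (Disjoint on B) ∧
      (∀ i, B i ⊆ Ico (p i) (q i)) ∧ ∀ i, m i ≤ (volume (B i)).toReal := by
  classical
  obtain ⟨δ, hδ, hcount⟩ := exists_sum_ceil_le_card_gridCells hpq hm hθ hall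
  obtain ⟨B, hB, hdisj, hsub, hvol⟩ := exists_gridCell_packing hδ _ hcount
  refine ⟨B, hB, hdisj, hsub, fun i => ?_⟩
  rw [hvol, ENNReal.toReal_mul, ENNReal.toReal_natCast, ENNReal.toReal_ofReal hδ.le]
  exact (div_le_iff₀ hδ).1 (Nat.le_ceil _)

theorem ofReal_rpow_le_setLIntegral_rpow_mul_measure_rpow {X : Type*} [MeasurableSpace X]
    {μ : Measure X} {A : Set X} {s : X → ℝ} (hs : Measurable s) (hs0 : ∀ t, 0 ≤ s t)
    {α w : ℝ} (hα : 1 < α) (hwA : w ≤ ∫ t in A, s t ∂μ) :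
    ENNReal.ofReal w ^ α ≤ (∫⁻ t in A, ENNReal.ofReal (s t ^ α) ∂μ) * μ A ^ (α - 1) := by
  have hα₀ : 0 < α := by linarith
  have hconj := Real.HolderConjugate.conjExponent hα
  have hwA' : ENNReal.ofReal w ≤ ∫⁻ t in A, ENNReal.ofReal (s t) ∂μ := by
    refine (ENNReal.ofReal_le_ofReal hwA).trans ?_
    rw [integral_eq_lintegral_of_nonneg_ae (.of_forall hs0) hs.aestronglyMeasurable]
    exact ENNReal.ofReal_toReal_le
  have hHolder := ENNReal.lintegral_mul_le_Lp_mul_Lq (μ.restrict A) hconj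
    hs.ennreal_ofReal.aemeasurable (aemeasurable_const (b := (1 : ℝ≥0∞)))
  simp only [Pi.mul_apply, mul_one, ENNReal.one_rpow, lintegral_const, Measure.restrict_apply_univ,
    one_mul] at hHolder
  calc ENNReal.ofReal w ^ α
      ≤ ((∫⁻ t in A, ENNReal.ofReal (s t) ^ α ∂μ) ^ (1 / α) * μ A ^ (1 / α.conjExponent)) ^ α :=
        ENNReal.rpow_le_rpow (hwA'.trans hHolder) hα₀.le
    _ = (∫⁻ t in A, ENNReal.ofReal (s t ^ α) ∂μ) * μ A ^ (α - 1) := by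
        rw [ENNReal.mul_rpow_of_nonneg _ _ hα₀.le, ← ENNReal.rpow_mul, ← ENNReal.rpow_mul,
          one_div_mul_cancel hα₀.ne', ENNReal.rpow_one]
        congr 1
        · exact lintegral_congr fun t => ENNReal.ofReal_rpow_of_nonneg (hs0 t) hα₀.le
        · congr 1
          rw [Real.conjExponent]
          field_simp

theorem ofReal_rpow_mul_measure_rpow_le_setLIntegral {X : Type*} [MeasurableSpace X]
    {μ : Measure X} {A : Set X} {s : X → ℝ} (hs : Measurable s) (hs0 : ∀ t, 0 ≤ s t)
    {α w : ℝ} (hα : 1 < α) (hw : 0 ≤ w) (hwA : w ≤ ∫ t in A, s t ∂μ) (hA : μ A ≠ ⊤) :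
    ENNReal.ofReal (w ^ α * (μ A).toReal ^ (1 - α)) ≤ ∫⁻ t in A, ENNReal.ofReal (s t ^ α) ∂μ := by
  rcases eq_or_ne (μ A) 0 with h0 | h0
  · simp [h0, Real.zero_rpow (sub_ne_zero.2 hα.ne)]
  calc ENNReal.ofReal (w ^ α * (μ A).toReal ^ (1 - α))
      = ENNReal.ofReal w ^ α * μ A ^ (1 - α) := by
        rw [ENNReal.ofReal_mul (by positivity), ENNReal.ofReal_rpow_of_nonneg hw (by linarith),
          ← ENNReal.ofReal_rpow_of_pos (ENNReal.toReal_pos h0 hA), ENNReal.ofReal_toReal hA]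
    _ ≤ (∫⁻ t in A, ENNReal.ofReal (s t ^ α) ∂μ) * μ A ^ (α - 1) * μ A ^ (1 - α) := by
        gcongr
        exact ofReal_rpow_le_setLIntegral_rpow_mul_measure_rpow hs hs0 hα hwA
    _ = ∫⁻ t in A, ENNReal.ofReal (s t ^ α) ∂μ := by
        rw [mul_assoc, ← ENNReal.rpow_add _ _ h0 hA, sub_add_sub_cancel', sub_self,
          ENNReal.rpow_zero, mul_one]

theorem rpow_mul_rpow_le_of_mul_le {w a b κ α : ℝ} (hα : 1 ≤ α) (hw : 0 ≤ w) (hκ : 0 < κ)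
    (ha : 0 < w → 0 < a) (hb : κ * a ≤ b) :
    w ^ α * b ^ (1 - α) ≤ κ ^ (1 - α) * (w ^ α * a ^ (1 - α)) := by
  rcases hw.eq_or_lt with rfl | hw
  · simp [Real.zero_rpow (by linarith : α ≠ 0)]
  have hb' : b ^ (1 - α) ≤ (κ * a) ^ (1 - α) :=
    Real.rpow_le_rpow_of_nonpos (mul_pos hκ (ha hw)) hb (by linarith)
  rw [Real.mul_rpow hκ.le (ha hw).le] at hb'
  calc w ^ α * b ^ (1 - α) ≤ w ^ α * (κ ^ (1 - α) * a ^ (1 - α)) := by gcongr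
    _ = κ ^ (1 - α) * (w ^ α * a ^ (1 - α)) := by ring

theorem exists_measurable_assignment {X ι : Type*} [MeasurableSpace X] [Countable ι]
    {B : ι → Set X} (hB : ∀ i, MeasurableSet (B i)) (hdisj : Pairwise (Disjoint on B)) :
    ∃ σ : X → Option ι, Measurable σ ∧ ∀ i, {t | σ t = some i} = B i := by
  classical
  set σ : X → Option ι := fun t => if h : ∃ i, t ∈ B i then some h.choose else none
  have hσ : ∀ i, {t | σ t = some i} = B i := fun i => by
    ext t
    by_cases h : ∃ j, t ∈ B j
    · have hσt : σ t = some h.choose := dif_pos h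
      simp only [mem_ofPred, hσt, Option.some.injEq]
      exact ⟨fun hi => hi ▸ h.choose_spec, fun ht =>
        by_contra fun hne => disjoint_left.1 (hdisj hne) h.choose_spec ht⟩
    · have hσt : σ t = none := dif_neg h
      simp only [mem_ofPred, hσt, reduceCtorEq, false_iff]
      exact fun ht => h ⟨i, ht⟩
  refine ⟨σ, measurable_to_countable' fun o => ?_, hσ⟩
  cases o with
  | some i =>
    change MeasurableSet {t | σ t = some i}
    exact hσ i ▸ hB i
  | none =>
    have : σ ⁻¹' {none} = (⋃ i, {t | σ t = some i})ᶜ := by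
      ext t
      simpa using Option.eq_none_iff_forall_ne_some
    rw [this, iUnion_congr hσ]
    exact (MeasurableSet.iUnion hB).compl

theorem div_rpow_mul_self {w b α : ℝ} (hw : 0 ≤ w) (hb : 0 ≤ b) (hα : 0 < α)
    (hwb : 0 < w → 0 < b) :
    (w / b) ^ α * b = w ^ α * b ^ (1 - α) := by
  rcases hb.eq_or_lt with rfl | hb
  · rcases hw.eq_or_lt with rfl | hw
    · simp [Real.zero_rpow hα.ne']
    · exact absurd (hwb hw) (lt_irrefl 0)
  rw [Real.div_rpow hw hb.le, Real.rpow_sub hb, Real.rpow_one]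
  field_simp

theorem SSOpt_le_sum_rpow_mul_volume_rpow {ι : Type*} [Fintype ι] {α : ℝ} (hα : 0 < α)
    (J : SSInstance ι) (hw : ∀ i, 0 ≤ J.w i) {B : ι → Set ℝ} (hB : ∀ i, MeasurableSet (B i))
    (hdisj : Pairwise (Disjoint on B)) (hBJ : ∀ i, B i ⊆ Ico (J.r i) (J.d i))
    (hpos : ∀ i, 0 < J.w i → volume (B i) ≠ 0) :
    SSOpt α J ≤ ∑ i, ENNReal.ofReal (J.w i ^ α * (volume (B i)).toReal ^ (1 - α)) := by
  obtain ⟨σ, hσ, hσB⟩ := exists_measurable_assignment hB hdisj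
  have hfin : ∀ i, volume (B i) ≠ ⊤ := fun i =>
    ((measure_mono (hBJ i)).trans_lt measure_Ico_lt_top).ne
  have hbpos : ∀ i, 0 < J.w i → 0 < (volume (B i)).toReal := fun i hi =>
    ENNReal.toReal_pos (hpos i hi) (hfin i)
  set v : ι → ℝ := fun i => J.w i / (volume (B i)).toReal
  set s : ℝ → ℝ := fun t => (σ t).elim 0 v
  have hmem : ∀ i t, t ∈ B i ↔ σ t = some i := fun i t => by rw [← hσB i]; rfl
  have hsB : ∀ i, ∀ t ∈ B i, s t = v i := fun i t ht => by simp only [s, (hmem i t).1 ht]; rfl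
  have hfeas : SSFeasible J s σ := by
    refine ⟨(measurable_from_top (f := fun o : Option ι => o.elim 0 v)).comp hσ, hσ, fun t => ?_,
      fun i => ⟨hσB i ▸ hBJ i, ?_⟩⟩
    · change 0 ≤ (σ t).elim 0 v
      cases σ t
      · exact le_rfl
      · exact div_nonneg (hw _) ENNReal.toReal_nonneg
    · rw [hσB i, setIntegral_congr_fun (hB i) (hsB i), setIntegral_const, smul_eq_mul,
        measureReal_def]
      rcases (hw i).eq_or_lt with h | h
      · simp [v, ← h]
      · rw [mul_div_cancel₀ _ (hbpos i h).ne']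
  have henergy : SSEnergy α s = ∑ i, ENNReal.ofReal (v i ^ α) * volume (B i) := by
    have hind : ∀ t, ENNReal.ofReal (s t ^ α)
        = ∑ i, (B i).indicator (fun _ => ENNReal.ofReal (v i ^ α)) t := fun t => by
      classical
      simp only [indicator_apply, hmem, s]
      cases σ t <;> simp [Real.zero_rpow hα.ne']
    rw [SSEnergy, lintegral_congr hind, lintegral_finsetSum _ fun i _ =>
      measurable_const.indicator (hB i)]
    exact Finset.sum_congr rfl fun i _ => lintegral_indicator_const (hB i) _
  calc SSOpt α J ≤ SSEnergy α s := sInf_le ⟨s, σ, hfeas, rfl⟩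
    _ = _ := by
      rw [henergy]
      refine Finset.sum_congr rfl fun i _ => ?_
      rw [← ENNReal.ofReal_toReal (hfin i),
        ← ENNReal.ofReal_mul (Real.rpow_nonneg (div_nonneg (hw i) ENNReal.toReal_nonneg) _),
        ENNReal.toReal_ofReal ENNReal.toReal_nonneg,
        div_rpow_mul_self (hw i) ENNReal.toReal_nonneg hα (hbpos i)]

theorem SSOpt_le_mul_SSOpt {α : ℝ} {ι ι' : Type*} {J : SSInstance ι} {J' : SSInstance ι'}
    {K : ℝ≥0∞} (hK₀ : K ≠ 0) (hK : K ≠ ⊤)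
    (h : ∀ s σ, SSFeasible J' s σ → SSOpt α J ≤ K * SSEnergy α s) :
    SSOpt α J ≤ K * SSOpt α J' := by
  rw [mul_comm, ← ENNReal.div_le_iff hK₀ hK]
  refine le_sInf ?_
  rintro _ ⟨s, σ, hf, rfl⟩
  rw [ENNReal.div_le_iff hK₀ hK, mul_comm]
  exact h s σ hf

theorem le_ofReal_rpow_mul_of_forall_lt {a b : ℝ≥0∞} {x₀ β : ℝ} (hx₀ : 0 < x₀)
    (h : ∀ x ∈ Ioo 0 x₀, a ≤ ENNReal.ofReal (x ^ β) * b) :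
    a ≤ ENNReal.ofReal (x₀ ^ β) * b := by
  have hlim : Tendsto (fun x => ENNReal.ofReal (x ^ β) * b) (𝓝[<] x₀)
      (𝓝 (ENNReal.ofReal (x₀ ^ β) * b)) :=
    ENNReal.Tendsto.mul_const (ENNReal.tendsto_ofReal
      ((Real.continuousAt_rpow_const x₀ β (.inl hx₀.ne')).tendsto.mono_left nhdsWithin_le_nhds))
      (.inl (ENNReal.ofReal_pos.2 (Real.rpow_pos_of_pos hx₀ β)).ne')
  exact ge_of_tendsto hlim (eventually_of_mem (Ioo_mem_nhdsLT hx₀) h)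

theorem SSFeasible.measurableSet {ι : Type*} {J : SSInstance ι} {s : ℝ → ℝ}
    {σ : ℝ → Option ι} (hf : SSFeasible J s σ) (i : ι) : MeasurableSet {t | σ t = some i} :=
  show MeasurableSet (σ ⁻¹' {some i}) from hf.2.1 MeasurableSpace.measurableSet_top

theorem SSFeasible.volume_ne_top {ι : Type*} {J : SSInstance ι} {s : ℝ → ℝ}
    {σ : ℝ → Option ι} (hf : SSFeasible J s σ) (i : ι) : volume {t | σ t = some i} ≠ ⊤ :=
  ((measure_mono (hf.2.2.2 i).1).trans_lt measure_Ico_lt_top).ne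

theorem SSFeasible.toReal_volume_pos {ι : Type*} {J : SSInstance ι} {s : ℝ → ℝ}
    {σ : ℝ → Option ι} (hf : SSFeasible J s σ) {i : ι} (hi : 0 < J.w i) :
    0 < (volume {t | σ t = some i}).toReal := by
  refine ENNReal.toReal_pos (fun h0 => ?_) (hf.volume_ne_top i)
  have : ∫ t in {t | σ t = some i}, s t = 0 := by
    rw [Measure.restrict_eq_zero.2 h0, integral_zero_measure]
  exact hi.not_ge ((hf.2.2.2 i).2.trans_eq this)

theorem SSOpt_le_rpow_mul_SSEnergy_of_dilate {ι : Type*} [Fintype ι] {α η κ : ℝ} (hα : 1 < α)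
    (hη : 0 ≤ η) {r d p q w : ι → ℝ} (hw : ∀ i, 0 ≤ w i) (hpq : ∀ i, p i < q i)
    (hp : ∀ i, p i - η * (q i - p i) ≤ r i) (hq : ∀ i, d i ≤ q i + η * (q i - p i))
    {s : ℝ → ℝ} {σ : ℝ → Option ι} (hf : SSFeasible ⟨r, d, w⟩ s σ)
    (hκ : 0 < κ) (hκη : κ * (1 + 2 * η) < 1) :
    SSOpt α (⟨p, q, w⟩ : SSInstance ι) ≤ ENNReal.ofReal (κ ^ (1 - α)) * SSEnergy α s := by
  set A : ι → Set ℝ := fun i => {t | σ t = some i}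
  have hAd : Pairwise (Disjoint on A) := fun i j hij =>
    disjoint_left.2 fun t hi hj => hij (Option.some_injective _ (hi.symm.trans hj))
  have hall : ∀ S : Finset ι, ∑ i ∈ S, κ * (volume (A i)).toReal
      ≤ κ * (1 + 2 * η) * (volume (⋃ i ∈ S, Ico (p i) (q i))).toReal := fun S => by
    have hfin : volume (⋃ i ∈ S, Ico (p i) (q i)) ≠ ⊤ :=
      (measure_biUnion_lt_top S.finite_toSet fun i _ => by simp [Real.volume_Ico]).ne
    have := ENNReal.toReal_mono (ENNReal.mul_ne_top ENNReal.ofReal_ne_top hfin)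
      (sum_volume_le_ofReal_mul_volume_biUnion_Ico hη hf.measurableSet hAd
        (fun i => (hf.2.2.2 i).1.trans (Ico_subset_Ico (hp i) (hq i))) S)
    rw [ENNReal.toReal_mul, ENNReal.toReal_ofReal (by linarith), ENNReal.toReal_sum
      fun i _ => hf.volume_ne_top i] at this
    rw [← Finset.mul_sum, mul_assoc]
    exact mul_le_mul_of_nonneg_left this hκ.le
  obtain ⟨B, hBm, hBd, hBsub, hBvol⟩ := exists_pairwiseDisjoint_subset_Ico_of_sum_le hpq
    (fun i => mul_nonneg hκ.le ENNReal.toReal_nonneg) hκη hall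
  calc SSOpt α (⟨p, q, w⟩ : SSInstance ι)
      ≤ ∑ i, ENNReal.ofReal (w i ^ α * (volume (B i)).toReal ^ (1 - α)) :=
        SSOpt_le_sum_rpow_mul_volume_rpow (by linarith) ⟨p, q, w⟩ hw hBm hBd hBsub fun i hi =>
          (ENNReal.toReal_pos_iff.1
            ((mul_pos hκ (hf.toReal_volume_pos hi)).trans_le (hBvol i))).1.ne'
    _ ≤ ∑ i, ENNReal.ofReal (κ ^ (1 - α)) * ∫⁻ t in A i, ENNReal.ofReal (s t ^ α) :=
        Finset.sum_le_sum fun i _ => calc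
          _ ≤ ENNReal.ofReal (κ ^ (1 - α) * (w i ^ α * (volume (A i)).toReal ^ (1 - α))) :=
            ENNReal.ofReal_le_ofReal
              (rpow_mul_rpow_le_of_mul_le hα.le (hw i) hκ hf.toReal_volume_pos (hBvol i))
          _ = ENNReal.ofReal (κ ^ (1 - α)) *
                ENNReal.ofReal (w i ^ α * (volume (A i)).toReal ^ (1 - α)) :=
            ENNReal.ofReal_mul (by positivity)
          _ ≤ _ := by
            gcongr
            exact ofReal_rpow_mul_measure_rpow_le_setLIntegral hf.1 hf.2.2.1 hα (hw i)
              (hf.2.2.2 i).2 (hf.volume_ne_top i)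
    _ = ENNReal.ofReal (κ ^ (1 - α)) * ∫⁻ t in ⋃ i, A i, ENNReal.ofReal (s t ^ α) := by
        rw [← Finset.mul_sum, lintegral_iUnion hf.measurableSet hAd, tsum_fintype]
    _ ≤ ENNReal.ofReal (κ ^ (1 - α)) * SSEnergy α s := by
        gcongr
        exact setLIntegral_le_lintegral _ _

theorem prediction_error_general (α : ℝ) (hα : 1 < α) (n : ℕ)
    (r d p q w : Fin n → ℝ) (η : ℝ) (hη : 0 ≤ η)
    (hw : ∀ i, 0 ≤ w i) (hpq : ∀ i, p i < q i)
    (hp : ∀ i, |p i - r i| ≤ η * (q i - p i))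
    (hq : ∀ i, |q i - d i| ≤ η * (q i - p i)) :
    SSOpt α (⟨p, q, w⟩ : SSInstance (Fin n))
      ≤ ENNReal.ofReal ((2 * η + 1) ^ (α - 1)) *
        SSOpt α (⟨r, d, w⟩ : SSInstance (Fin n)) := by
  have hc : 0 < 2 * η + 1 := by linarith
  have hp' : ∀ i, p i - η * (q i - p i) ≤ r i := fun i => by linarith [(abs_le.1 (hp i)).2]
  have hq' : ∀ i, d i ≤ q i + η * (q i - p i) := fun i => by linarith [(abs_le.1 (hq i)).1]
  refine SSOpt_le_mul_SSOpt (ENNReal.ofReal_pos.2 (Real.rpow_pos_of_pos hc _)).ne'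
    ENNReal.ofReal_ne_top fun s σ hf => ?_
  have := le_ofReal_rpow_mul_of_forall_lt (inv_pos.2 hc) fun κ hκ =>
    SSOpt_le_rpow_mul_SSEnergy_of_dilate hα hη hw hpq hp' hq' hf hκ.1
      (by nlinarith [mul_lt_mul_of_pos_right hκ.2 hc, inv_mul_cancel₀ hc.ne'])
  rwa [Real.inv_rpow hc.le, ← Real.rpow_neg hc.le, neg_sub] at this

/-- **Lemma `PredictionError`.** If the predicted release times and deadlines differ
from the actual ones by at most `η` times the predicted interval length, then the
optimal energy of the predicted instance `J_PQ` is at most `(2η+1)^(α-1)` times that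
of the actual instance `J_RD`. -/
theorem prediction_error (α : ℝ) (hα : 1 < α) (n : ℕ)
    (r d p q w : Fin n → ℝ) (η : ℝ) (hη : 0 ≤ η)
    (hw : ∀ i, 0 ≤ w i) (hrd : ∀ i, r i < d i) (hpq : ∀ i, p i < q i)
    (hp : ∀ i, |p i - r i| ≤ η * (q i - p i))
    (hq : ∀ i, |q i - d i| ≤ η * (q i - p i)) :
    SSOpt α (⟨p, q, w⟩ : SSInstance (Fin n))
      ≤ ENNReal.ofReal ((2 * η + 1) ^ (α - 1)) *
        SSOpt α (⟨r, d, w⟩ : SSInstance (Fin n)) :=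
  prediction_error_general α hα n r d p q w η hη hw hpq hp hq
end

section
/- Energy of the predicted instance versus the actual instance for common deadlines (Corollary 'CD_PredictionError'): Let η ≥ 0. Consider n jobs with workloads w_i ≥ 0 that share a common deadline d, with actual release times r_i < d and predicted release times p_i < d such that |p_i − r_i| ≤ η·(d − p_i) for every i. Let J_P be the instance in which job i has interval [p_i, d) and workload w_i, and J_R the instance in which job i has interval [r_i, d) and workload w_i. Then OPT(J_P) ≤ (1 + η)^(α−1) · OPT(J_R). -/
open MeasureTheory
open scoped ENNReal

/-!
Dilate time by the factor `1 + η` around the common deadline, `t ↦ (1 + η) t - η d`, and run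
the machine `1 + η` times faster. A feasible schedule for `J_R` becomes one for `J_P`, since
`|p i - r i| ≤ η (d - p i)` says exactly that the preimage of `[r i, d)` lies in `[p i, d)`.
Every job receives the same work, and the energy is multiplied by `(1 + η) ^ α / (1 + η)`.
-/

open Set

section AffineChangeOfVariables

variable {a : ℝ}

theorem map_volume_mul_add (ha : a ≠ 0) (b : ℝ) :
    Measure.map (fun t : ℝ => a * t + b) volume = ENNReal.ofReal |a⁻¹| • volume := by
  change Measure.map ((· + b) ∘ (a * ·)) volume = _
  rw [← Measure.map_map (measurable_add_const b) (measurable_const_mul a),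
    Real.map_volume_mul_left ha, Measure.map_smul, map_add_right_eq_self]

theorem measurableEmbedding_mul_add (ha : a ≠ 0) (b : ℝ) :
    MeasurableEmbedding (fun t : ℝ => a * t + b) :=
  (measurableEmbedding_addRight b).comp (measurableEmbedding_mulLeft₀ ha)

theorem lintegral_comp_mul_add (f : ℝ → ℝ≥0∞) (ha : a ≠ 0) (b : ℝ) :
    ∫⁻ t, f (a * t + b) = ENNReal.ofReal |a⁻¹| * ∫⁻ t, f t := by
  rw [← (measurableEmbedding_mul_add ha b).lintegral_map, map_volume_mul_add ha,
    lintegral_smul_measure, smul_eq_mul]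

theorem setIntegral_comp_mul_add {E : Type*} [NormedAddCommGroup E] [NormedSpace ℝ E]
    (f : ℝ → E) (ha : a ≠ 0) (b : ℝ) (A : Set ℝ) :
    ∫ t in (fun t => a * t + b) ⁻¹' A, f (a * t + b) = |a⁻¹| • ∫ t in A, f t := by
  rw [← (measurableEmbedding_mul_add ha b).setIntegral_map, map_volume_mul_add ha,
    Measure.restrict_smul, integral_smul_measure, ENNReal.toReal_ofReal (abs_nonneg _)]

end AffineChangeOfVariables

section TimeDilation

variable {ι : Type*} {J J' : SSInstance ι} {s : ℝ → ℝ} {σ : ℝ → Option ι} {a : ℝ}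

theorem SSFeasible.comp_mul_add (h : SSFeasible J s σ) (ha : 0 < a) (b : ℝ)
    (hI : ∀ i, (fun t => a * t + b) ⁻¹' Ico (J.r i) (J.d i) ⊆ Ico (J'.r i) (J'.d i))
    (hw : ∀ i, J'.w i ≤ J.w i) :
    SSFeasible J' (fun t => a * s (a * t + b)) (fun t => σ (a * t + b)) := by
  obtain ⟨hs, hσ, hs0, hjob⟩ := h
  have hg : Measurable fun t : ℝ => a * t + b := (measurable_const_mul a).add_const b
  refine ⟨(hs.comp hg).const_mul a, hσ.comp hg, fun t => mul_nonneg ha.le (hs0 _),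
    fun i => ⟨?_, ?_⟩⟩
  · exact (preimage_mono (hjob i).1).trans (hI i)
  · calc J'.w i ≤ J.w i := hw i
      _ ≤ ∫ t in {t | σ t = some i}, s t := (hjob i).2
      _ = a * (|a⁻¹| * ∫ t in {t | σ t = some i}, s t) := by
        rw [abs_of_pos (inv_pos.mpr ha), mul_inv_cancel_left₀ ha.ne']
      _ = a * ∫ t in (fun t => a * t + b) ⁻¹' {t | σ t = some i}, s (a * t + b) := by
        rw [setIntegral_comp_mul_add s ha.ne', smul_eq_mul]
      _ = ∫ t in {t | σ (a * t + b) = some i}, a * s (a * t + b) :=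
        (integral_const_mul _ _).symm

theorem SSEnergy_comp_mul_add (α : ℝ) (hs : ∀ t, 0 ≤ s t) (ha : 0 < a) (b : ℝ) :
    SSEnergy α (fun t => a * s (a * t + b)) = ENNReal.ofReal (a ^ (α - 1)) * SSEnergy α s := by
  have hscale : a ^ (α - 1) = a ^ α * |a⁻¹| := by
    rw [Real.rpow_sub_one ha.ne', abs_of_pos (inv_pos.mpr ha), div_eq_mul_inv]
  simp_rw [SSEnergy, Real.mul_rpow ha.le (hs _), ENNReal.ofReal_mul (Real.rpow_nonneg ha.le _),
    lintegral_const_mul' _ _ ENNReal.ofReal_ne_top,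
    lintegral_comp_mul_add (fun t => ENNReal.ofReal (s t ^ α)) ha.ne', hscale,
    ENNReal.ofReal_mul (Real.rpow_nonneg ha.le _), mul_assoc]

theorem SSFeasible.SSOpt_le_SSEnergy (h : SSFeasible J s σ) (α : ℝ) :
    SSOpt α J ≤ SSEnergy α s :=
  sInf_le ⟨s, σ, h, rfl⟩

theorem SSOpt_le_mul_of_forall_feasible (α : ℝ) {c : ℝ≥0∞} (hc0 : c ≠ 0) (hc : c ≠ ⊤)
    (h : ∀ s σ, SSFeasible J s σ →
      ∃ s' σ', SSFeasible J' s' σ' ∧ SSEnergy α s' ≤ c * SSEnergy α s) :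
    SSOpt α J' ≤ c * SSOpt α J := by
  rw [mul_comm, ← ENNReal.div_le_iff_le_mul (.inl hc0) (.inl hc)]
  refine le_sInf ?_
  rintro _ ⟨s, σ, hJ, rfl⟩
  obtain ⟨s', σ', hJ', hE⟩ := h s σ hJ
  rw [ENNReal.div_le_iff_le_mul (.inl hc0) (.inl hc), mul_comm]
  exact (hJ'.SSOpt_le_SSEnergy α).trans hE

theorem SSOpt_le_of_mul_add (α : ℝ) (ha : 0 < a) (b : ℝ)
    (hI : ∀ i, (fun t => a * t + b) ⁻¹' Ico (J.r i) (J.d i) ⊆ Ico (J'.r i) (J'.d i))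
    (hw : ∀ i, J'.w i ≤ J.w i) :
    SSOpt α J' ≤ ENNReal.ofReal (a ^ (α - 1)) * SSOpt α J := by
  refine SSOpt_le_mul_of_forall_feasible α ?_ ENNReal.ofReal_ne_top fun s σ h => ?_
  · simpa using Real.rpow_pos_of_pos ha _
  · exact ⟨_, _, h.comp_mul_add ha b hI hw, (SSEnergy_comp_mul_add α h.2.2.1 ha b).le⟩

end TimeDilation

theorem cd_prediction_error_general (α : ℝ) (n : ℕ)
    (r p w : Fin n → ℝ) (d : ℝ) (η : ℝ) (hη : 0 ≤ η)
    (hp : ∀ i, |p i - r i| ≤ η * (d - p i)) :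
    SSOpt α (⟨p, fun _ => d, w⟩ : SSInstance (Fin n))
      ≤ ENNReal.ofReal ((1 + η) ^ (α - 1)) *
        SSOpt α (⟨r, fun _ => d, w⟩ : SSInstance (Fin n)) := by
  refine SSOpt_le_of_mul_add α (by linarith) (-(η * d)) (fun i t ⟨hrt, htd⟩ => ?_)
    fun _ => le_rfl
  have hpr : p i - r i ≤ η * (d - p i) := (abs_le.mp (hp i)).2
  dsimp only at hrt htd ⊢
  constructor <;> nlinarith

/-- **Corollary `CD_PredictionError`.** For common-deadline instances: if the predicted
release times differ from the actual ones by at most `η` times the predicted interval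
length, the optimal energy of the predicted instance `J_P` is at most `(1+η)^(α-1)`
times that of the actual instance `J_R`. -/
theorem cd_prediction_error (α : ℝ) (hα : 1 < α) (n : ℕ)
    (r p w : Fin n → ℝ) (d : ℝ) (η : ℝ) (hη : 0 ≤ η)
    (hw : ∀ i, 0 ≤ w i) (hrd : ∀ i, r i < d) (hpd : ∀ i, p i < d)
    (hp : ∀ i, |p i - r i| ≤ η * (d - p i)) :
    SSOpt α (⟨p, fun _ => d, w⟩ : SSInstance (Fin n))
      ≤ ENNReal.ofReal ((1 + η) ^ (α - 1)) *
        SSOpt α (⟨r, fun _ => d, w⟩ : SSInstance (Fin n)) :=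
  cd_prediction_error_general α n r p w d η hη hp
end
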